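/- arXiv:2012.15757 — 4 statements merged into one kernel-verified Lean document; each statement's English description precedes it below -/
import Mathlib

section
/- For all real x > -1, (1+x)·ln(1+x) − x ≥ x² / ((2/3)·x + 2). -/
/-!
With `t = 1 + x` the claim reads `t log t - (t - 1) ≥ 3 (t - 1)² / (2 (t + 2))`, which follows by
multiplying the bound `log t ≥ (t - 1)(5t + 1) / (2t(t + 2))` by `t`. The difference of the two sides of
that bound has derivative `(t - 1)³ / (t² (t + 2)²)`, which changes sign at `t = 1`, where the
difference vanishes.
-/

open Set

theorem isMinOn_of_hasDerivAt_sign_change {f f' : ℝ → ℝ} {s : Set ℝ} {a : ℝ} (hs : Convex ℝ s)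
    (ha : a ∈ s) (hf : ∀ x ∈ s, HasDerivAt f (f' x) x) (hleft : ∀ x ∈ s, x < a → f' x ≤ 0)
    (hright : ∀ x ∈ s, a < x → 0 ≤ f' x) : IsMinOn f s a := by
  intro x hx
  have hcont : ∀ {b c}, b ∈ s → c ∈ s → ContinuousOn f (Icc b c) := fun hb hc y hy ↦
    (hf y (hs.ordConnected.out hb hc hy)).continuousAt.continuousWithinAt
  have hderiv : ∀ {b c}, b ∈ s → c ∈ s →
      ∀ y ∈ interior (Icc b c), HasDerivWithinAt f (f' y) (interior (Icc b c)) y :=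
    fun hb hc y hy ↦ (hf y (hs.ordConnected.out hb hc (interior_subset hy))).hasDerivWithinAt
  rcases le_total a x with hax | hxa
  · refine monotoneOn_of_hasDerivWithinAt_nonneg (convex_Icc a x) (hcont ha hx) (hderiv ha hx)
      (fun y hy ↦ ?_) (left_mem_Icc.2 hax) (right_mem_Icc.2 hax) hax
    rw [interior_Icc] at hy
    exact hright y (hs.ordConnected.out ha hx (Ioo_subset_Icc_self hy)) hy.1
  · refine antitoneOn_of_hasDerivWithinAt_nonpos (convex_Icc x a) (hcont hx ha) (hderiv hx ha)
      (fun y hy ↦ ?_) (left_mem_Icc.2 hxa) (right_mem_Icc.2 hxa) hxa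
    rw [interior_Icc] at hy
    exact hleft y (hs.ordConnected.out hx ha (Ioo_subset_Icc_self hy)) hy.2

theorem Real.hasDerivAt_log_sub_rationalBound {t : ℝ} (ht : 0 < t) :
    HasDerivAt (fun t ↦ Real.log t - (t - 1) * (5 * t + 1) / (2 * t * (t + 2)))
      ((t - 1) ^ 3 / (t ^ 2 * (t + 2) ^ 2)) t := by
  have hden : 2 * t * (t + 2) ≠ 0 := by positivity
  have hrat := (((hasDerivAt_id' t).sub_const 1).fun_mul
    (((hasDerivAt_id' t).const_mul 5).add_const 1)).fun_div
    (((hasDerivAt_id' t).const_mul 2).fun_mul ((hasDerivAt_id' t).add_const 2)) hden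
  refine ((Real.hasDerivAt_log ht.ne').fun_sub hrat).congr_deriv ?_
  field_simp
  ring

theorem Real.rationalBound_le_log {t : ℝ} (ht : 0 < t) :
    (t - 1) * (5 * t + 1) / (2 * t * (t + 2)) ≤ Real.log t := by
  have hmin := isMinOn_of_hasDerivAt_sign_change (convex_Ioi 0) (mem_Ioi.2 one_pos)
    (fun _ ht ↦ Real.hasDerivAt_log_sub_rationalBound ht)
    (fun _ _ hlt ↦ div_nonpos_of_nonpos_of_nonneg
      (Odd.pow_nonpos (by decide) (by linarith)) (by positivity))
    (fun _ _ hgt ↦ div_nonneg (pow_nonneg (by linarith) 3) (by positivity))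
    (mem_Ioi.2 ht)
  simpa [sub_nonneg] using hmin

theorem stmt_0 (x : ℝ) (hx : x > -1) :
    (1 + x) * Real.log (1 + x) - x ≥ x ^ 2 / ((2 / 3) * x + 2) := by
  have ht : 0 < 1 + x := by linarith
  have h3 : x + 3 ≠ 0 := by linarith
  have hrat : x ^ 2 / ((2 / 3) * x + 2) =
      (1 + x) * ((1 + x - 1) * (5 * (1 + x) + 1) / (2 * (1 + x) * (1 + x + 2))) - x := by
    field_simp
    ring
  rw [ge_iff_le, hrat]
  linarith [mul_le_mul_of_nonneg_left (Real.rationalBound_le_log ht) ht.le]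
end

section
/- Let f(x) = (1+x)·ln(1+x) − x − x²/((2/3)x + 2) for x > −1. Then f''(x) ≥ 0 for all x > −1, f'(0) = 0, and f(0) = 0; consequently f(x) ≥ 0 for all x > −1. -/
/-!
`x ^ 2 / ((2 / 3) * x + 2)` is a Padé approximant of `(1 + x) * log (1 + x) - x` at `0`, and the gap
`f` between them is convex on `(-1, ∞)`: its second derivative `1 / (1 + x) - 27 / (x + 3) ^ 3`
equals `x ^ 2 * (x + 9) / ((1 + x) * (x + 3) ^ 3) ≥ 0`. Since `f' 0 = 0`, the point `0` is a global
minimum of `f` there, and `f 0 = 0`.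
-/

open Real Set

noncomputable def padeGap (x : ℝ) : ℝ :=
  (1 + x) * log (1 + x) - x - x ^ 2 / ((2 / 3) * x + 2)

noncomputable def padeGapDeriv (x : ℝ) : ℝ :=
  log (1 + x) - 3 * x * (x + 6) / (2 * (x + 3) ^ 2)

theorem ConvexOn.isMinOn_of_hasDerivAt_eq_zero {S : Set ℝ} {f : ℝ → ℝ} {x : ℝ}
    (hf : ConvexOn ℝ S f) (hx : x ∈ interior S) (hfx : HasDerivAt f 0 x) : IsMinOn f S x :=
  hf.isMinOn_of_rightDeriv_eq_zero hx (hfx.hasDerivWithinAt.derivWithin (uniqueDiffWithinAt_Ioi x))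

theorem hasDerivAt_padeGap {x : ℝ} (hx : -1 < x) : HasDerivAt padeGap (padeGapDeriv x) x := by
  have h1x : 1 + x ≠ 0 := by linarith
  have hD : (2 / 3) * x + 2 ≠ 0 := by linarith
  have hx3 : x + 3 ≠ 0 := by linarith
  have h1 : HasDerivAt (fun y : ℝ => 1 + y) 1 x := (hasDerivAt_id' x).const_add 1
  have hD' : HasDerivAt (fun y : ℝ => (2 / 3) * y + 2) (2 / 3) x := by
    simpa using ((hasDerivAt_id' x).const_mul (2 / 3 : ℝ)).add_const 2
  refine (((h1.mul (h1.log h1x)).sub (hasDerivAt_id' x)).sub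
    ((hasDerivAt_pow 2 x).div hD' hD)).congr_deriv ?_
  unfold padeGapDeriv
  field_simp
  ring

theorem hasDerivAt_padeGapDeriv {x : ℝ} (hx : -1 < x) :
    HasDerivAt padeGapDeriv (x ^ 2 * (x + 9) / ((1 + x) * (x + 3) ^ 3)) x := by
  have h1x : 1 + x ≠ 0 := by linarith
  have hx3 : x + 3 ≠ 0 := by linarith
  have h1 : HasDerivAt (fun y : ℝ => 1 + y) 1 x := (hasDerivAt_id' x).const_add 1
  have hN : HasDerivAt (fun y : ℝ => 3 * y * (y + 6)) (3 * 1 * (x + 6) + 3 * x * 1) x :=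
    ((hasDerivAt_id' x).const_mul (3 : ℝ)).mul ((hasDerivAt_id' x).add_const 6)
  have hM : HasDerivAt (fun y : ℝ => 2 * (y + 3) ^ 2) (2 * (↑2 * (x + 3) ^ (2 - 1) * 1)) x :=
    (((hasDerivAt_id' x).add_const 3).pow 2).const_mul (2 : ℝ)
  refine ((h1.log h1x).sub (hN.div hM (by positivity))).congr_deriv ?_
  field_simp
  ring

theorem deriv_padeGap {x : ℝ} (hx : -1 < x) : deriv padeGap x = padeGapDeriv x :=
  (hasDerivAt_padeGap hx).deriv

theorem hasDerivAt_deriv_padeGap {x : ℝ} (hx : -1 < x) :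
    HasDerivAt (deriv padeGap) (x ^ 2 * (x + 9) / ((1 + x) * (x + 3) ^ 3)) x :=
  (hasDerivAt_padeGapDeriv hx).congr_of_eventuallyEq <|
    (eventually_gt_nhds hx).mono fun _ hy => deriv_padeGap hy

theorem deriv_deriv_padeGap_nonneg {x : ℝ} (hx : -1 < x) : 0 ≤ deriv (deriv padeGap) x := by
  rw [(hasDerivAt_deriv_padeGap hx).deriv]
  exact div_nonneg (mul_nonneg (sq_nonneg x) (by linarith))
    (mul_nonneg (by linarith) (pow_nonneg (by linarith) 3))

theorem convexOn_padeGap : ConvexOn ℝ (Ioi (-1)) padeGap := by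
  refine convexOn_of_deriv2_nonneg (convex_Ioi _) ?_ ?_ ?_ ?_ <;> try rw [interior_Ioi]
  · exact fun x hx => (hasDerivAt_padeGap hx).continuousAt.continuousWithinAt
  · exact fun x hx => (hasDerivAt_padeGap hx).differentiableAt.differentiableWithinAt
  · exact fun x hx => (hasDerivAt_deriv_padeGap hx).differentiableAt.differentiableWithinAt
  · exact fun x hx => deriv_deriv_padeGap_nonneg hx

theorem padeGap_zero : padeGap 0 = 0 := by simp [padeGap]

theorem padeGapDeriv_zero : padeGapDeriv 0 = 0 := by simp [padeGapDeriv]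

theorem padeGap_nonneg {x : ℝ} (hx : -1 < x) : 0 ≤ padeGap x := by
  have hmin : IsMinOn padeGap (Ioi (-1)) 0 :=
    convexOn_padeGap.isMinOn_of_hasDerivAt_eq_zero (by simp [interior_Ioi])
      ((hasDerivAt_padeGap (by norm_num)).congr_deriv padeGapDeriv_zero)
  exact padeGap_zero ▸ hmin hx

theorem stmt_1 (f : ℝ → ℝ)
    (hf : ∀ x : ℝ, f x = (1 + x) * Real.log (1 + x) - x - x ^ 2 / ((2 / 3) * x + 2)) :
    (∀ x : ℝ, x > -1 → deriv (deriv f) x ≥ 0) ∧ deriv f 0 = 0 ∧ f 0 = 0 ∧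
      ∀ x : ℝ, x > -1 → f x ≥ 0 := by
  obtain rfl : f = padeGap := funext hf
  exact ⟨fun x hx => deriv_deriv_padeGap_nonneg hx,
    (deriv_padeGap (by norm_num)).trans padeGapDeriv_zero, padeGap_zero,
    fun x hx => padeGap_nonneg hx⟩
end

section
/- Let I = (α,β) be a bounded open interval, W ∈ L^∞(I) nonnegative, and J ⊂ I a subinterval with ∫_J W(x) dx =: S > 0 and J = (β − d, β − d + b) for some 0 < b ≤ d < β − α. Then the lowest Neumann eigenvalue E₁ of −d²/dx² + W on I satisfies E₁ ≥ π²/(2(β−α))² − 2π⁴/(S·(2(β−α))³). -/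
open MeasureTheory Real intervalIntegral Set

lemma poincare_core (ψ : ℝ → ℝ) (a e θ k : ℝ) (hae : a ≤ e)
    (hψ : ContDiffOn ℝ 1 ψ (Set.Icc a e))
    (hang : ∀ x ∈ Set.Icc a e, |k * (x - θ)| < π / 2) :
    (-k * Real.tan (k * (e - θ))) * ψ e ^ 2 - (-k * Real.tan (k * (a - θ))) * ψ a ^ 2
      + k ^ 2 * ∫ x in a..e, ψ x ^ 2 ≤ ∫ x in a..e, (deriv ψ x) ^ 2 := by
  rcases eq_or_lt_of_le hae with rfl | hlt
  · simp
  have hcos : ∀ x ∈ Set.Icc a e, Real.cos (k * (x - θ)) ≠ 0 := by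
    intro x hx
    have := hang x hx
    exact (Real.cos_pos_of_mem_Ioo (Set.mem_Ioo.2 (abs_lt.1 this))).ne'
  set g : ℝ → ℝ := derivWithin ψ (Set.Icc a e) with hgdef
  set C : ℝ → ℝ := fun x => -k * Real.tan (k * (x - θ)) with hCdef
  set C' : ℝ → ℝ := fun x => -k ^ 2 * (1 + Real.tan (k * (x - θ)) ^ 2) with hC'def
  set F' : ℝ → ℝ := fun x => C' x * ψ x ^ 2 + C x * (2 * ψ x * g x) with hF'def
  have hψc : ContinuousOn ψ (Set.Icc a e) := hψ.continuousOn
  have hgc : ContinuousOn g (Set.Icc a e) :=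
    hψ.continuousOn_derivWithin (uniqueDiffOn_Icc hlt) le_rfl
  have htanc : ContinuousOn (fun x => Real.tan (k * (x - θ))) (Set.Icc a e) := by
    exact Real.continuousOn_tan.comp (Continuous.continuousOn (by fun_prop)) hcos
  have hCc : ContinuousOn C (Set.Icc a e) := continuousOn_const.mul htanc
  have hC'c : ContinuousOn C' (Set.Icc a e) :=
    continuousOn_const.mul (continuousOn_const.add (htanc.pow 2))
  have hF'c : ContinuousOn F' (Set.Icc a e) :=
    (hC'c.mul (hψc.pow 2)).add (hCc.mul ((continuousOn_const.mul hψc).mul hgc))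
  have hψd : ∀ x ∈ Set.Ioo a e, HasDerivAt ψ (g x) x := by
    intro x hx
    exact ((hψ.differentiableOn one_ne_zero x (Set.Ioo_subset_Icc_self hx)).hasDerivWithinAt).hasDerivAt
      (Icc_mem_nhds hx.1 hx.2)
  have hCd : ∀ x ∈ Set.Icc a e, HasDerivAt C (C' x) x := by
    intro x hx
    have h1 : HasDerivAt (fun y : ℝ => k * (y - θ)) k x := by
      simpa using ((hasDerivAt_id x).sub_const θ).const_mul k
    have h2 : HasDerivAt (fun y => Real.tan (k * (y - θ)))
        ((1 / Real.cos (k * (x - θ)) ^ 2) * k) x :=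
      by have := (Real.hasDerivAt_tan (hcos x hx)).comp x h1; exact this
    have h3 := h2.const_mul (-k)
    refine h3.congr_deriv (Eq.symm ?_)
    have := Real.inv_one_add_tan_sq (hcos x hx)
    simp only [hC'def]
    rw [one_div]
    rw [← this]
    field_simp
  -- FTC for F = C * ψ^2
  have hFTC : ∫ x in a..e, F' x = C e * ψ e ^ 2 - C a * ψ a ^ 2 := by
    apply intervalIntegral.integral_eq_sub_of_hasDerivAt_of_le hae
      (hCc.mul (hψc.pow 2))
    · intro x hx
      have := (hCd x (Set.Ioo_subset_Icc_self hx)).mul ((hψd x hx).pow 2)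
      refine this.congr_deriv (Eq.symm ?_)
      simp only [hF'def, Pi.pow_apply]
      ring
    · exact ContinuousOn.intervalIntegrable (by rw [Set.uIcc_of_le hae]; exact hF'c)
  have key : ∀ x, (g x) ^ 2 = (g x - C x * ψ x) ^ 2 + F' x + k ^ 2 * ψ x ^ 2 := by
    intro x
    simp only [hF'def, hCdef, hC'def]
    ring
  have hint1 : IntervalIntegrable (fun x => (g x - C x * ψ x) ^ 2) volume a e :=
    ContinuousOn.intervalIntegrable
      (by rw [Set.uIcc_of_le hae]; exact (hgc.sub (hCc.mul hψc)).pow 2)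
  have hint2 : IntervalIntegrable F' volume a e :=
    ContinuousOn.intervalIntegrable (by rw [Set.uIcc_of_le hae]; exact hF'c)
  have hint3 : IntervalIntegrable (fun x => ψ x ^ 2) volume a e :=
    ContinuousOn.intervalIntegrable (by rw [Set.uIcc_of_le hae]; exact hψc.pow 2)
  have hsplit : ∫ x in a..e, (g x) ^ 2
      = (∫ x in a..e, (g x - C x * ψ x) ^ 2) + (∫ x in a..e, F' x)
        + k ^ 2 * ∫ x in a..e, ψ x ^ 2 := by
    rw [← intervalIntegral.integral_const_mul]
    rw [← intervalIntegral.integral_add hint1 hint2,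
      ← intervalIntegral.integral_add (hint1.add hint2) (hint3.const_mul _)]
    exact intervalIntegral.integral_congr (fun x _ => key x)
  have hpos : 0 ≤ ∫ x in a..e, (g x - C x * ψ x) ^ 2 :=
    intervalIntegral.integral_nonneg hae (fun u _ => sq_nonneg _)
  have hcongr : ∫ x in a..e, (deriv ψ x) ^ 2 = ∫ x in a..e, (g x) ^ 2 := by
    apply intervalIntegral.integral_congr_ae
    have hne : ∀ᵐ x : ℝ, x ≠ e := by
      rw [ae_iff]
      simp only [not_not, Set.setOf_eq_eq_singleton]
      exact measure_singleton e
    filter_upwards [hne] with x hxe hx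
    rw [Set.uIoc_of_le hae] at hx
    have hxo : x ∈ Set.Ioo a e := ⟨hx.1, lt_of_le_of_ne hx.2 hxe⟩
    rw [(hψd x hxo).deriv]
  rw [hcongr, hsplit, hFTC]
  simp only [hCdef]
  linarith

theorem stmt_10 (α β : ℝ) (hαβ : α < β) (W : ℝ → ℝ)
    (hWmeas : Measurable W) (hWnonneg : ∀ x, 0 ≤ W x)
    (hWbdd : ∃ M : ℝ, ∀ x ∈ Set.Ioo α β, W x ≤ M)
    (b d : ℝ) (hb : 0 < b) (hbd : b ≤ d) (hd : d < β - α)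
    (S : ℝ) (hS : 0 < S) (hSdef : (∫ x in (β - d)..(β - d + b), W x) = S)
    (E₁ : ℝ)
    (hE₁ : IsGLB { r : ℝ | ∃ φ : ℝ → ℝ, ContDiffOn ℝ 1 φ (Set.Icc α β) ∧
        (∫ x in α..β, (φ x) ^ 2) = 1 ∧
        r = (∫ x in α..β, (deriv φ x) ^ 2) + ∫ x in α..β, W x * (φ x) ^ 2 } E₁) :
    E₁ ≥ π ^ 2 / (2 * (β - α)) ^ 2 - 2 * π ^ 4 / (S * (2 * (β - α)) ^ 3) := by
  have hπ := Real.pi_pos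
  obtain ⟨L, hLdef⟩ : ∃ L : ℝ, L = β - α := ⟨_, rfl⟩
  rw [← hLdef]
  have hL0 : (0:ℝ) < L := by rw [hLdef]; linarith
  obtain ⟨k, hkdef⟩ : ∃ k : ℝ, k = π / (2 * L) := ⟨_, rfl⟩
  have hk0 : 0 < k := by rw [hkdef]; exact div_pos hπ (by linarith)
  have hkL : k * L = π / 2 := by rw [hkdef]; field_simp
  have hRform : π ^ 2 / (2 * L) ^ 2 - 2 * π ^ 4 / (S * (2 * L) ^ 3)
      = k ^ 2 - 4 * k ^ 4 * L / S := by
    rw [hkdef]; field_simp; ring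
  rw [ge_iff_le, hRform]
  refine hE₁.2 ?_
  rintro r ⟨φ, hφ, hφnorm, rfl⟩
  have hab : α ≤ β := hαβ.le
  have hφc : ContinuousOn φ (Set.Icc α β) := hφ.continuousOn
  have hJ1 : α < β - d := by linarith
  have hJ2 : β - d ≤ β - d + b := by linarith
  have hJ3 : β - d + b ≤ β := by linarith
  have hJsub : Set.Icc (β - d) (β - d + b) ⊆ Set.Icc α β := Set.Icc_subset_Icc hJ1.le hJ3
  obtain ⟨x₀, hx₀J, hx₀min⟩ := isCompact_Icc.exists_isMinOn (Set.nonempty_Icc.2 hJ2)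
      ((hφc.mono hJsub).pow 2)
  have hx₀αβ : x₀ ∈ Set.Icc α β := hJsub hx₀J
  have hx₀α : α < x₀ := lt_of_lt_of_le hJ1 hx₀J.1
  have hx₀β : x₀ ≤ β := hx₀αβ.2
  have hφint : IntervalIntegrable φ volume α β :=
    ContinuousOn.intervalIntegrable (by rw [Set.uIcc_of_le hab]; exact hφc)
  have hφ2int : IntervalIntegrable (fun x => φ x ^ 2) volume α β :=
    ContinuousOn.intervalIntegrable (by rw [Set.uIcc_of_le hab]; exact hφc.pow 2)
  obtain ⟨T, hTdef⟩ : ∃ T : ℝ, T = ∫ x in α..β, φ x := ⟨_, rfl⟩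
  have expand : ∀ t : ℝ, (∫ x in α..β, (φ x - t) ^ 2) = 1 - 2 * t * T + t ^ 2 * L := by
    intro t
    have h1 : (fun x => (φ x - t) ^ 2) = fun x => (φ x ^ 2 - 2 * t * φ x) + t ^ 2 := by
      funext x; ring
    rw [h1, intervalIntegral.integral_add (hφ2int.sub (hφint.const_mul (2 * t)))
        intervalIntegrable_const,
      intervalIntegral.integral_sub hφ2int (hφint.const_mul (2 * t)),
      intervalIntegral.integral_const_mul, intervalIntegral.integral_const, hφnorm,
      smul_eq_mul, ← hTdef, hLdef]
    ring
  have hT2 : T ^ 2 ≤ L := by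
    have h0 : 0 ≤ ∫ x in α..β, (φ x - T / L) ^ 2 :=
      intervalIntegral.integral_nonneg hab (fun u _ => sq_nonneg _)
    rw [expand (T / L)] at h0
    have h2 : 0 ≤ (1 - 2 * (T / L) * T + (T / L) ^ 2 * L) * L := mul_nonneg h0 hL0.le
    have h3 : (1 - 2 * (T / L) * T + (T / L) ^ 2 * L) * L = L - T ^ 2 := by
      field_simp
      ring
    linarith [h3 ▸ h2]
  -- W integrability
  obtain ⟨M, hM⟩ := hWbdd
  obtain ⟨B, hB⟩ := isCompact_Icc.exists_bound_of_continuousOn (hφc.pow 2)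
  have hβae : ∀ p q : ℝ, ∀ᵐ x : ℝ ∂(volume.restrict (Set.Ioc p q)), x ≠ β := by
    intro p q
    apply ae_restrict_of_ae
    rw [ae_iff]
    simp only [not_not, Set.setOf_eq_eq_singleton]
    exact measure_singleton β
  have hWfint : ∀ p q : ℝ, α ≤ p → p ≤ q → q ≤ β →
      IntervalIntegrable (fun x => W x * φ x ^ 2) volume p q := by
    intro p q hp hpq hq
    rw [intervalIntegrable_iff_integrableOn_Ioc_of_le hpq]
    have hsub : Set.Ioc p q ⊆ Set.Icc α β := fun x hx => ⟨le_trans hp hx.1.le, hx.2.trans hq⟩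
    have hmeas : AEStronglyMeasurable (fun x => W x * φ x ^ 2)
        (volume.restrict (Set.Ioc p q)) :=
      (hWmeas.aestronglyMeasurable.restrict).mul
        (((hφc.mono hsub).pow 2).aestronglyMeasurable measurableSet_Ioc)
    apply Integrable.mono' (integrable_const (max M 0 * max B 0)) hmeas
    filter_upwards [ae_restrict_mem measurableSet_Ioc, hβae p q] with x hx hxβ
    have hxo : x ∈ Set.Ioo α β := ⟨lt_of_le_of_lt hp hx.1, lt_of_le_of_ne (hx.2.trans hq) hxβ⟩
    have h1 : 0 ≤ W x := hWnonneg x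
    have h2 : (0:ℝ) ≤ φ x ^ 2 := sq_nonneg _
    have h3 : φ x ^ 2 ≤ max B 0 := by
      have := hB x (Set.Ioo_subset_Icc_self hxo)
      rw [Real.norm_eq_abs, Pi.pow_apply, abs_of_nonneg h2] at this
      exact le_max_of_le_left this
    rw [Real.norm_eq_abs, abs_of_nonneg (mul_nonneg h1 h2)]
    exact mul_le_mul (le_max_of_le_left (hM x hxo)) h3 h2 (le_max_right M 0)
  have hWintJ : IntervalIntegrable W volume (β - d) (β - d + b) := by
    rw [intervalIntegrable_iff_integrableOn_Ioc_of_le hJ2]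
    apply Integrable.mono' (integrable_const (max M 0)) (hWmeas.aestronglyMeasurable.restrict)
    filter_upwards [ae_restrict_mem measurableSet_Ioc, hβae (β - d) (β - d + b)] with x hx hxβ
    have hxo : x ∈ Set.Ioo α β := ⟨lt_of_lt_of_le hJ1 hx.1.le, lt_of_le_of_ne (hx.2.trans hJ3) hxβ⟩
    rw [Real.norm_eq_abs, abs_of_nonneg (hWnonneg x)]
    exact le_max_of_le_left (hM x hxo)
  -- potential term lower bound
  have hJlow : φ x₀ ^ 2 * S ≤ ∫ x in (β - d)..(β - d + b), W x * φ x ^ 2 := by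
    have h1 : φ x₀ ^ 2 * S = ∫ x in (β - d)..(β - d + b), φ x₀ ^ 2 * W x := by
      rw [intervalIntegral.integral_const_mul, hSdef]
    rw [h1]
    apply intervalIntegral.integral_mono_on hJ2 (hWintJ.const_mul _)
      (hWfint _ _ hJ1.le hJ2 hJ3)
    intro x hx
    have hmin : φ x₀ ^ 2 ≤ φ x ^ 2 := isMinOn_iff.1 hx₀min x hx
    calc φ x₀ ^ 2 * W x ≤ φ x ^ 2 * W x := mul_le_mul_of_nonneg_right hmin (hWnonneg x)
      _ = W x * φ x ^ 2 := mul_comm _ _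
  have hPsplit : (∫ x in (β - d)..(β - d + b), W x * φ x ^ 2)
      ≤ ∫ x in α..β, W x * φ x ^ 2 := by
    have e1 := intervalIntegral.integral_add_adjacent_intervals
      (hWfint α (β - d) le_rfl hJ1.le (by linarith)) (hWfint (β - d) (β - d + b) hJ1.le hJ2 hJ3)
    have e2 := intervalIntegral.integral_add_adjacent_intervals
      (hWfint α (β - d + b) le_rfl (by linarith) hJ3) (hWfint (β - d + b) β (by linarith) hJ3 le_rfl)
    have n1 : 0 ≤ ∫ x in α..(β - d), W x * φ x ^ 2 :=
      intervalIntegral.integral_nonneg hJ1.le (fun u _ => mul_nonneg (hWnonneg u) (sq_nonneg _))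
    have n2 : 0 ≤ ∫ x in (β - d + b)..β, W x * φ x ^ 2 :=
      intervalIntegral.integral_nonneg hJ3 (fun u _ => mul_nonneg (hWnonneg u) (sq_nonneg _))
    linarith
  -- derivative term
  obtain ⟨G, hGdef⟩ : ∃ G : ℝ → ℝ, G = derivWithin φ (Set.Icc α β) := ⟨_, rfl⟩
  have hGc : ContinuousOn G (Set.Icc α β) := by
    rw [hGdef]; exact hφ.continuousOn_derivWithin (uniqueDiffOn_Icc hαβ) le_rfl
  have hφd : ∀ x ∈ Set.Ioo α β, HasDerivAt φ (G x) x := by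
    rw [hGdef]
    exact fun x hx =>
      ((hφ.differentiableOn one_ne_zero x (Set.Ioo_subset_Icc_self hx)).hasDerivWithinAt).hasDerivAt
        (Icc_mem_nhds hx.1 hx.2)
  have hd2int : ∀ p q : ℝ, α ≤ p → p ≤ q → q ≤ β →
      IntervalIntegrable (fun x => (deriv φ x) ^ 2) volume p q := by
    intro p q hp hpq hq
    rw [intervalIntegrable_iff_integrableOn_Ioc_of_le hpq]
    have hsub : Set.Icc p q ⊆ Set.Icc α β := Set.Icc_subset_Icc hp hq
    have hGint : IntegrableOn (fun x => (G x) ^ 2) (Set.Ioc p q) volume :=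
      (((hGc.mono hsub).pow 2).integrableOn_Icc).mono_set Set.Ioc_subset_Icc_self
    apply hGint.congr
    filter_upwards [ae_restrict_mem measurableSet_Ioc, hβae p q] with x hx hxβ
    have hxo : x ∈ Set.Ioo α β := ⟨lt_of_le_of_lt hp hx.1, lt_of_le_of_ne (hx.2.trans hq) hxβ⟩
    rw [(hφd x hxo).deriv]
  have hψ2int : ∀ p q : ℝ, α ≤ p → p ≤ q → q ≤ β →
      IntervalIntegrable (fun x => (φ x - φ x₀) ^ 2) volume p q := by
    intro p q hp hpq hq
    apply ContinuousOn.intervalIntegrable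
    rw [Set.uIcc_of_le hpq]
    exact ((hφc.mono (Set.Icc_subset_Icc hp hq)).sub continuousOn_const).pow 2
  obtain ⟨Q, hQdef⟩ : ∃ Q : ℝ, Q = ∫ x in α..β, (φ x - φ x₀) ^ 2 := ⟨_, rfl⟩
  have hQsum : (∫ x in α..x₀, (φ x - φ x₀) ^ 2) + (∫ x in x₀..β, (φ x - φ x₀) ^ 2) = Q := by
    rw [hQdef]
    exact intervalIntegral.integral_add_adjacent_intervals
      (hψ2int α x₀ le_rfl hx₀α.le hx₀β) (hψ2int x₀ β hx₀α.le hx₀β le_rfl)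
  have hDsum : (∫ x in α..x₀, (deriv φ x) ^ 2) + (∫ x in x₀..β, (deriv φ x) ^ 2)
      = ∫ x in α..β, (deriv φ x) ^ 2 :=
    intervalIntegral.integral_add_adjacent_intervals
      (hd2int α x₀ le_rfl hx₀α.le hx₀β) (hd2int x₀ β hx₀α.le hx₀β le_rfl)
  have keyk : ∀ k' : ℝ, 0 < k' → k' < k → k' ^ 2 * Q ≤ ∫ x in α..β, (deriv φ x) ^ 2 := by
    intro k' hk'0 hk'k
    have hkk'L : k' * L < π / 2 := by
      have := mul_lt_mul_of_pos_right hk'k hL0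
      linarith
    have hψ1 : ContDiffOn ℝ 1 (fun x => φ x - φ x₀) (Set.Icc α x₀) :=
      (hφ.sub contDiffOn_const).mono (Set.Icc_subset_Icc le_rfl hx₀β)
    have hψ2 : ContDiffOn ℝ 1 (fun x => φ x - φ x₀) (Set.Icc x₀ β) :=
      (hφ.sub contDiffOn_const).mono (Set.Icc_subset_Icc hx₀α.le le_rfl)
    have hang1 : ∀ x ∈ Set.Icc α x₀, |k' * (x - α)| < π / 2 := by
      intro x hx
      have h1 : 0 ≤ k' * (x - α) := mul_nonneg hk'0.le (by linarith [hx.1])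
      have h2 : k' * (x - α) ≤ k' * L :=
        mul_le_mul_of_nonneg_left (by rw [hLdef]; linarith [hx.2, hx₀β]) hk'0.le
      rw [abs_of_nonneg h1]; linarith
    have hang2 : ∀ x ∈ Set.Icc x₀ β, |k' * (x - β)| < π / 2 := by
      intro x hx
      have h1 : k' * (x - β) ≤ 0 := mul_nonpos_of_nonneg_of_nonpos hk'0.le (by linarith [hx.2])
      have h2 : -(k' * (x - β)) = k' * (β - x) := by ring
      have h3 : k' * (β - x) ≤ k' * L :=
        mul_le_mul_of_nonneg_left (by rw [hLdef]; linarith [hx.1, hx₀α]) hk'0.le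
      rw [abs_of_nonpos h1, h2]; linarith
    have h1 := poincare_core (fun x => φ x - φ x₀) α x₀ α k' hx₀α.le hψ1 hang1
    have h2 := poincare_core (fun x => φ x - φ x₀) x₀ β β k' hx₀β hψ2 hang2
    simp only [sub_self, mul_zero, zero_mul, Real.tan_zero, neg_zero, zero_pow,
      ne_eq, OfNat.ofNat_ne_zero, not_false_eq_true, zero_add, zero_sub, sub_zero,
      deriv_sub_const] at h1 h2
    calc k' ^ 2 * Q
        = k' ^ 2 * (∫ x in α..x₀, (φ x - φ x₀) ^ 2)
          + k' ^ 2 * (∫ x in x₀..β, (φ x - φ x₀) ^ 2) := by rw [← hQsum]; ring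
      _ ≤ (∫ x in α..x₀, (deriv φ x) ^ 2) + (∫ x in x₀..β, (deriv φ x) ^ 2) := by
          apply add_le_add <;> linarith [h1, h2]
      _ = ∫ x in α..β, (deriv φ x) ^ 2 := hDsum
  have hQ0 : 0 ≤ Q := by
    rw [hQdef]; exact intervalIntegral.integral_nonneg hab (fun u _ => sq_nonneg _)
  have hkQ : k ^ 2 * Q ≤ ∫ x in α..β, (deriv φ x) ^ 2 := by
    have htend : Filter.Tendsto (fun x : ℝ => x ^ 2 * Q) (nhdsWithin k (Set.Iio k))
        (nhds (k ^ 2 * Q)) :=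
      (((continuous_pow 2).mul continuous_const).continuousAt).tendsto.mono_left
        nhdsWithin_le_nhds
    apply le_of_tendsto htend
    filter_upwards [eventually_mem_nhdsWithin,
      eventually_nhdsWithin_of_eventually_nhds (eventually_gt_nhds hk0)] with x hx1 hx2
    exact keyk x hx2 hx1
  -- conclusion
  have hQe : Q = 1 - 2 * φ x₀ * T + φ x₀ ^ 2 * L := by rw [hQdef]; exact expand (φ x₀)
  have hD : k ^ 2 * (1 - 2 * φ x₀ * T + φ x₀ ^ 2 * L) ≤ ∫ x in α..β, (deriv φ x) ^ 2 := by
    rw [← hQe]; exact hkQ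
  have hP : φ x₀ ^ 2 * S ≤ ∫ x in α..β, W x * φ x ^ 2 := le_trans hJlow hPsplit
  have hSne : S ≠ 0 := hS.ne'
  have key2 : 0 ≤ S * (k ^ 2 * (1 - 2 * φ x₀ * T + φ x₀ ^ 2 * L) + φ x₀ ^ 2 * S
      - (k ^ 2 - 4 * k ^ 4 * L / S)) := by
    have heq : S * (k ^ 2 * (1 - 2 * φ x₀ * T + φ x₀ ^ 2 * L) + φ x₀ ^ 2 * S
        - (k ^ 2 - 4 * k ^ 4 * L / S))
        = S * k ^ 2 * φ x₀ ^ 2 * L + S ^ 2 * φ x₀ ^ 2 - 2 * S * k ^ 2 * φ x₀ * T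
          + 4 * k ^ 4 * L := by
      field_simp
      ring
    rw [heq]
    have e1 : 0 ≤ S ^ 2 * φ x₀ ^ 2 - 2 * S * k ^ 2 * φ x₀ * T + k ^ 4 * T ^ 2 := by
      have := sq_nonneg (S * φ x₀ - k ^ 2 * T)
      calc (0:ℝ) ≤ (S * φ x₀ - k ^ 2 * T) ^ 2 := this
        _ = S ^ 2 * φ x₀ ^ 2 - 2 * S * k ^ 2 * φ x₀ * T + k ^ 4 * T ^ 2 := by ring
    have e2 : k ^ 4 * T ^ 2 ≤ k ^ 4 * L := mul_le_mul_of_nonneg_left hT2 (pow_nonneg hk0.le 4)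
    have e3 : 0 ≤ S * k ^ 2 * φ x₀ ^ 2 * L := by positivity
    have e4 : 0 ≤ k ^ 4 * L := mul_nonneg (pow_nonneg hk0.le 4) hL0.le
    linarith
  have key3 : 0 ≤ k ^ 2 * (1 - 2 * φ x₀ * T + φ x₀ ^ 2 * L) + φ x₀ ^ 2 * S
      - (k ^ 2 - 4 * k ^ 4 * L / S) := nonneg_of_mul_nonneg_right key2 hS
  linarith
end

section
/- Let ν > 0 and for every E > 0 define N(E) = ν·e^{−νπE^{−1/2}}/(1 − e^{−νπE^{−1/2}}) (the Luttinger–Sy limiting integrated density of states), extended by 0 for E ≤ 0. Then for every β > 0 the integral ρ_c = ∫_{(0,∞)} (e^{βE} − 1)^{−1} dN(E) is finite, and N(E) = exp(−νπ·E^{−1/2}·(1 + o(1))) as E ↓ 0. -/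
open MeasureTheory Real Filter
open scoped ENNReal

open Set Topology
open scoped Nat

/-! With `y = νπ/√E` we have `N(E) = ν / (e^y - 1)`, and `e^y - 1 ≥ y^(k+1)/(k+1)!` yields both the
Lifshitz tail `N(E) = O(E³)` and `N(E) ≤ √E/π`. On the pieces `((n+2)⁻¹, (n+1)⁻¹]` and
`(n+1, n+2]` of `(0, ∞)` the Bose factor `(e^{βE} - 1)⁻¹` is at most `(n+2)/β`, resp. `O(n⁻³)`,
while their `N`-mass is `O(n⁻³)`, resp. `O(n)`; so `ρ_c ≲ ∑ (n+1)⁻²`. For the asymptotics,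
`-log N(E) = y - log ν + log (1 - e^{-y})`, and multiplying by `√E = νπ/y` gives `νπ + o(1)`. -/

lemma pow_succ_div_factorial_le_exp_sub_one {y : ℝ} (hy : 0 ≤ y) (k : ℕ) :
    y ^ (k + 1) / (k + 1)! ≤ exp y - 1 := by
  have hsum := sum_le_exp_of_nonneg hy (k + 2)
  rw [Finset.sum_range_succ] at hsum
  have hone : 1 ≤ ∑ i ∈ Finset.range (k + 1), y ^ i / i ! := by
    simpa using Finset.single_le_sum (f := fun i => y ^ i / i !) (fun i _ => by positivity)
      (Finset.mem_range.2 k.succ_pos)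
  linarith

lemma inv_exp_sub_one_le {y : ℝ} (hy : 0 < y) (k : ℕ) :
    (exp y - 1)⁻¹ ≤ (k + 1)! / y ^ (k + 1) := by
  rw [← inv_div]
  exact inv_anti₀ (by positivity) (pow_succ_div_factorial_le_exp_sub_one hy.le k)

lemma log_exp_sub_one {y : ℝ} (hy : 0 < y) : log (exp y - 1) = y + log (1 - exp (-y)) := by
  have h : exp y - 1 = exp y * (1 - exp (-y)) := by
    rw [mul_sub, ← exp_add, add_neg_cancel, exp_zero, mul_one]
  have hpos : 0 < 1 - exp (-y) := sub_pos.2 (exp_lt_one_iff.2 (neg_neg_of_pos hy))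
  rw [h, log_mul (exp_ne_zero y) hpos.ne', log_exp]

lemma mul_exp_neg_div_one_sub_exp_neg (ν y : ℝ) :
    ν * exp (-y) / (1 - exp (-y)) = ν / (exp y - 1) := by
  rw [← mul_div_mul_right _ _ (exp_ne_zero y), mul_assoc, sub_mul, ← exp_add, neg_add_cancel,
    exp_zero, one_mul, mul_one]

lemma Ioi_zero_subset_iUnion_Ioc :
    Ioi (0:ℝ) ⊆ ⋃ n : ℕ, (Ioc ((n + 2 : ℝ)⁻¹) (n + 1 : ℝ)⁻¹ ∪ Ioc (n + 1 : ℝ) (n + 2)) := by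
  intro x (hx : 0 < x)
  rw [mem_iUnion]
  rcases le_or_gt x 1 with hx1 | hx1
  · obtain ⟨n, hn⟩ : ∃ n : ℕ, ⌊x⁻¹⌋₊ = n + 1 :=
      Nat.exists_eq_add_one.2 (Nat.floor_pos.2 (one_le_inv₀ hx |>.2 hx1))
    obtain ⟨hlo, hhi⟩ := (Nat.floor_eq_iff (inv_nonneg.2 hx.le)).1 hn
    push_cast at hlo hhi
    refine ⟨n, Or.inl ⟨?_, ?_⟩⟩
    · rw [inv_lt_comm₀ (by positivity) hx]; linarith
    · rw [le_inv_comm₀ hx (by positivity)]; exact hlo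
  · obtain ⟨n, hn⟩ : ∃ n : ℕ, ⌈x⌉₊ = n + 2 :=
      Nat.exists_eq_add_of_le' (Nat.lt_ceil.2 (by exact_mod_cast hx1))
    obtain ⟨hlo, hhi⟩ := (Nat.ceil_eq_iff (by omega)).1 hn
    push_cast at hlo hhi
    exact ⟨n, Or.inr ⟨by linarith, hhi⟩⟩

lemma setLIntegral_Ioc_ofReal_le {m : Measure ℝ} {F g : ℝ → ℝ} {a b C : ℝ}
    (hm : m (Ioc a b) = ENNReal.ofReal (F b - F a)) (hFa : 0 ≤ F a) (hC : 0 ≤ C)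
    (hg : ∀ x ∈ Ioc a b, g x ≤ C) :
    ∫⁻ x in Ioc a b, ENNReal.ofReal (g x) ∂m ≤ ENNReal.ofReal (C * F b) :=
  calc ∫⁻ x in Ioc a b, ENNReal.ofReal (g x) ∂m
      ≤ ∫⁻ _ in Ioc a b, ENNReal.ofReal C ∂m :=
        setLIntegral_mono measurable_const fun x hx => ENNReal.ofReal_le_ofReal (hg x hx)
    _ = ENNReal.ofReal C * ENNReal.ofReal (F b - F a) := by rw [setLIntegral_const, hm]
    _ ≤ ENNReal.ofReal (C * F b) := by
      rw [← ENNReal.ofReal_mul hC]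
      exact ENNReal.ofReal_le_ofReal (by gcongr; linarith)

lemma add_two_div_pow_three_le (x : ℝ) (hx : 0 ≤ x) : (x + 2) / (x + 1) ^ 3 ≤ 2 / (x + 1) ^ 2 := by
  rw [div_le_div_iff₀ (by positivity) (by positivity)]
  nlinarith [pow_nonneg (add_nonneg hx zero_le_one) 2]

section BoseIntegral

variable {β A B : ℝ} {F : ℝ → ℝ} {m : Measure ℝ}

lemma setLIntegral_Ioc_inv_le_of_le_mul_pow_three (hβ : 0 < β) (hA : 0 ≤ A)
    (hF_nonneg : ∀ x, 0 < x → 0 ≤ F x) (hF_zero : ∀ x, 0 < x → x ≤ 1 → F x ≤ A * x ^ 3)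
    (hm : ∀ a b, a ≤ b → m (Ioc a b) = ENNReal.ofReal (F b - F a)) (n : ℕ) :
    ∫⁻ E in Ioc ((n + 2 : ℝ)⁻¹) (n + 1 : ℝ)⁻¹, ENNReal.ofReal (exp (β * E) - 1)⁻¹ ∂m ≤
      ENNReal.ofReal (2 * A / β / (n + 1) ^ 2) := by
  have hn : (0:ℝ) < n + 1 := by positivity
  have hbound : ∀ x ∈ Ioc ((n + 2 : ℝ)⁻¹) (n + 1 : ℝ)⁻¹, (exp (β * x) - 1)⁻¹ ≤ (n + 2) / β := by
    rintro x ⟨hx, -⟩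
    have hx0 : 0 < x := lt_trans (by positivity) hx
    calc (exp (β * x) - 1)⁻¹ ≤ 1 / (β * x) := by simpa using inv_exp_sub_one_le (mul_pos hβ hx0) 0
      _ ≤ (n + 2) / β := by
        rw [div_le_div_iff₀ (by positivity) hβ]
        nlinarith [(inv_lt_iff_one_lt_mul₀ (by positivity : (0:ℝ) < n + 2)).1 hx]
  refine (setLIntegral_Ioc_ofReal_le (hm _ _ (by gcongr; linarith))
    (hF_nonneg _ (by positivity)) (by positivity) hbound).trans (ENNReal.ofReal_le_ofReal ?_)
  calc (n + 2) / β * F (n + 1 : ℝ)⁻¹ ≤ (n + 2) / β * (A * ((n + 1 : ℝ)⁻¹) ^ 3) := by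
        gcongr; exact hF_zero _ (by positivity) (inv_le_one_of_one_le₀ (by linarith))
    _ = A / β * ((n + 2) / (n + 1) ^ 3) := by field_simp
    _ ≤ A / β * (2 / (n + 1) ^ 2) :=
        mul_le_mul_of_nonneg_left (add_two_div_pow_three_le _ n.cast_nonneg) (by positivity)
    _ = 2 * A / β / (n + 1) ^ 2 := by ring

lemma setLIntegral_Ioc_inv_le_of_le_mul (hβ : 0 < β) (hB : 0 ≤ B)
    (hF_nonneg : ∀ x, 0 < x → 0 ≤ F x) (hF_infty : ∀ x, 1 ≤ x → F x ≤ B * x)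
    (hm : ∀ a b, a ≤ b → m (Ioc a b) = ENNReal.ofReal (F b - F a)) (n : ℕ) :
    ∫⁻ E in Ioc (n + 1 : ℝ) (n + 2), ENNReal.ofReal (exp (β * E) - 1)⁻¹ ∂m ≤
      ENNReal.ofReal (12 * B / β ^ 3 / (n + 1) ^ 2) := by
  have hn : (0:ℝ) < n + 1 := by positivity
  have hbound : ∀ x ∈ Ioc (n + 1 : ℝ) (n + 2), (exp (β * x) - 1)⁻¹ ≤ 6 / (β * (n + 1)) ^ 3 := by
    rintro x ⟨hx, -⟩
    calc (exp (β * x) - 1)⁻¹ ≤ 6 / (β * x) ^ 3 := by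
          simpa [Nat.factorial] using inv_exp_sub_one_le (mul_pos hβ (hn.trans hx)) 2
      _ ≤ 6 / (β * (n + 1)) ^ 3 := by gcongr
  refine (setLIntegral_Ioc_ofReal_le (hm _ _ (by linarith)) (hF_nonneg _ hn) (by positivity)
    hbound).trans (ENNReal.ofReal_le_ofReal ?_)
  calc 6 / (β * (n + 1)) ^ 3 * F (n + 2) ≤ 6 / (β * (n + 1)) ^ 3 * (B * (n + 2)) := by
        gcongr; exact hF_infty _ (by linarith)
    _ = 6 * B / β ^ 3 * ((n + 2) / (n + 1) ^ 3) := by field_simp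
    _ ≤ 6 * B / β ^ 3 * (2 / (n + 1) ^ 2) :=
        mul_le_mul_of_nonneg_left (add_two_div_pow_three_le _ n.cast_nonneg) (by positivity)
    _ = 12 * B / β ^ 3 / (n + 1) ^ 2 := by ring

theorem lintegral_inv_exp_sub_one_lt_top (hβ : 0 < β)
    (hF_nonneg : ∀ x, 0 < x → 0 ≤ F x) (hF_zero : ∀ x, 0 < x → x ≤ 1 → F x ≤ A * x ^ 3)
    (hF_infty : ∀ x, 1 ≤ x → F x ≤ B * x)
    (hm : ∀ a b, a ≤ b → m (Ioc a b) = ENNReal.ofReal (F b - F a)) :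
    ∫⁻ E in Ioi 0, ENNReal.ofReal (exp (β * E) - 1)⁻¹ ∂m < ⊤ := by
  have hA : 0 ≤ A := by simpa using (hF_nonneg 1 one_pos).trans (hF_zero 1 one_pos le_rfl)
  have hB : 0 ≤ B := by simpa using (hF_nonneg 1 one_pos).trans (hF_infty 1 le_rfl)
  set K := 2 * A / β + 12 * B / β ^ 3
  have hsum : Summable fun n : ℕ => K / ((n : ℝ) + 1) ^ 2 := by
    have := (summable_nat_add_iff 1).2 (Real.summable_one_div_nat_pow.2 one_lt_two)
    simpa [div_eq_mul_inv] using this.mul_left K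
  calc ∫⁻ E in Ioi 0, ENNReal.ofReal (exp (β * E) - 1)⁻¹ ∂m
      ≤ ∑' n : ℕ, ∫⁻ E in Ioc ((n + 2 : ℝ)⁻¹) (n + 1 : ℝ)⁻¹ ∪ Ioc (n + 1 : ℝ) (n + 2),
          ENNReal.ofReal (exp (β * E) - 1)⁻¹ ∂m :=
        (lintegral_mono_set Ioi_zero_subset_iUnion_Ioc).trans (lintegral_iUnion_le _ _)
    _ ≤ ∑' n : ℕ, ENNReal.ofReal (K / ((n : ℝ) + 1) ^ 2) := by
        refine ENNReal.tsum_le_tsum fun n => (lintegral_union_le _ _ _).trans ?_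
        rw [add_div, ENNReal.ofReal_add (by positivity) (by positivity)]
        exact add_le_add (setLIntegral_Ioc_inv_le_of_le_mul_pow_three hβ hA hF_nonneg hF_zero hm n)
          (setLIntegral_Ioc_inv_le_of_le_mul hβ hB hF_nonneg hF_infty hm n)
    _ = ENNReal.ofReal (∑' n : ℕ, K / ((n : ℝ) + 1) ^ 2) :=
        (ENNReal.ofReal_tsum_of_nonneg (fun n => by positivity) hsum).symm
    _ < ⊤ := ENNReal.ofReal_lt_top

end BoseIntegral

/-- The paper's `ν e^{-νπ/√E} / (1 - e^{-νπ/√E})`, rewritten. For `E ≤ 0` we have `√E = 0`, and the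
junk value `ν / 0 = 0` makes it vanish, as `N` does. -/
noncomputable def luttingerSyIDS (ν E : ℝ) : ℝ := ν / (exp (ν * π / √E) - 1)

section LuttingerSy

variable {ν E : ℝ}

lemma luttingerSyIDS_of_nonpos (hE : E ≤ 0) : luttingerSyIDS ν E = 0 := by
  simp [luttingerSyIDS, sqrt_eq_zero'.2 hE]

lemma luttingerSyIDS_eq (hE : 0 < E) :
    ν * exp (-ν * π * E ^ (-(1:ℝ)/2)) / (1 - exp (-ν * π * E ^ (-(1:ℝ)/2))) =
      luttingerSyIDS ν E := by
  have h : -ν * π * E ^ (-(1:ℝ)/2) = -(ν * π / √E) := by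
    rw [neg_div, rpow_neg hE.le, sqrt_eq_rpow]; ring
  rw [h, mul_exp_neg_div_one_sub_exp_neg, luttingerSyIDS]

lemma luttingerSyIDS_nonneg (hν : 0 ≤ ν) (E : ℝ) : 0 ≤ luttingerSyIDS ν E :=
  div_nonneg hν (sub_nonneg.2 (one_le_exp (by positivity)))

lemma luttingerSyIDS_le (hν : 0 < ν) (hE : 0 < E) (k : ℕ) :
    luttingerSyIDS ν E ≤ (k + 1)! / (ν ^ k * π ^ (k + 1)) * √E ^ (k + 1) := by
  have hs : 0 < √E := sqrt_pos.2 hE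
  calc luttingerSyIDS ν E = ν * (exp (ν * π / √E) - 1)⁻¹ := div_eq_mul_inv _ _
    _ ≤ ν * ((k + 1)! / (ν * π / √E) ^ (k + 1)) := by
      gcongr; exact inv_exp_sub_one_le (by positivity) k
    _ = (k + 1)! / (ν ^ k * π ^ (k + 1)) * √E ^ (k + 1) := by
      rw [div_pow, mul_pow, pow_succ ν]; field_simp

lemma luttingerSyIDS_le_pow_three (hν : 0 < ν) (hE : 0 < E) :
    luttingerSyIDS ν E ≤ 720 / (ν ^ 5 * π ^ 6) * E ^ 3 := by
  have h6 : √E ^ 6 = E ^ 3 := by rw [pow_mul √E 2 3, sq_sqrt hE.le]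
  simpa [Nat.factorial, h6] using luttingerSyIDS_le hν hE 5

lemma luttingerSyIDS_le_sqrt_div_pi (hν : 0 < ν) (hE : 0 < E) : luttingerSyIDS ν E ≤ √E / π := by
  simpa [div_eq_inv_mul] using luttingerSyIDS_le hν hE 0

lemma neg_log_luttingerSyIDS_mul_sqrt (hν : 0 < ν) (hE : 0 < E) :
    -log (luttingerSyIDS ν E) * √E = ν * π + (log (1 - exp (-(ν * π / √E))) - log ν) * √E := by
  have hs : 0 < √E := sqrt_pos.2 hE
  have hy : 0 < ν * π / √E := by positivity
  rw [luttingerSyIDS, log_div hν.ne' (sub_pos.2 (one_lt_exp_iff.2 hy)).ne', log_exp_sub_one hy]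
  field_simp
  ring

lemma tendsto_neg_log_luttingerSyIDS_mul_sqrt (hν : 0 < ν) :
    Tendsto (fun E => -log (luttingerSyIDS ν E) * √E) (𝓝[>] 0) (𝓝 (ν * π)) := by
  have hsqrt : Tendsto sqrt (𝓝[>] 0) (𝓝 0) := by
    simpa using continuous_sqrt.continuousWithinAt (s := Ioi 0) (x := 0) |>.tendsto
  have hsqrt' : Tendsto sqrt (𝓝[>] 0) (𝓝[>] 0) :=
    tendsto_nhdsWithin_iff.2 ⟨hsqrt, eventually_mem_nhdsWithin.mono fun E hE => sqrt_pos.2 hE⟩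
  have hexp : Tendsto (fun E => exp (-(ν * π / √E))) (𝓝[>] 0) (𝓝 0) := by
    refine tendsto_exp_atBot.comp (tendsto_neg_atTop_atBot.comp ?_)
    simpa [div_eq_mul_inv] using
      (tendsto_inv_nhdsGT_zero.comp hsqrt').const_mul_atTop (by positivity : 0 < ν * π)
  have hlog : Tendsto (fun E => log (1 - exp (-(ν * π / √E)))) (𝓝[>] 0) (𝓝 0) := by
    have h1 : Tendsto (fun E => 1 - exp (-(ν * π / √E))) (𝓝[>] 0) (𝓝 1) := by
      simpa using (tendsto_const_nhds (x := (1:ℝ))).sub hexp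
    simpa using h1.log one_ne_zero
  have hlim := tendsto_const_nhds (x := ν * π) |>.add
    ((hlog.sub (tendsto_const_nhds (x := log ν))).mul hsqrt)
  rw [zero_sub, neg_mul, mul_zero, neg_zero, add_zero] at hlim
  exact hlim.congr' (eventually_mem_nhdsWithin.mono fun E hE =>
    (neg_log_luttingerSyIDS_mul_sqrt hν hE).symm)

end LuttingerSy

theorem stmt_18 (ν β : ℝ) (hν : 0 < ν) (hβ : 0 < β) (N : ℝ → ℝ)
    (hN : ∀ E : ℝ, 0 < E →
      N E = ν * exp (-ν * π * E ^ (-(1:ℝ)/2)) / (1 - exp (-ν * π * E ^ (-(1:ℝ)/2))))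
    (hN0 : ∀ E : ℝ, E ≤ 0 → N E = 0) :
    (∀ m : Measure ℝ,
      (∀ a b : ℝ, a ≤ b → m (Set.Ioc a b) = ENNReal.ofReal (N b - N a)) →
      (∫⁻ E in Set.Ioi (0:ℝ), ENNReal.ofReal (exp (β * E) - 1)⁻¹ ∂m) < ⊤) ∧
    Tendsto (fun E : ℝ => -Real.log (N E) * Real.sqrt E)
      (nhdsWithin 0 (Set.Ioi 0)) (nhds (ν * π)) := by
  obtain rfl : N = luttingerSyIDS ν := funext fun E => by
    rcases le_or_gt E 0 with hE | hE
    · rw [hN0 E hE, luttingerSyIDS_of_nonpos hE]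
    · rw [hN E hE, luttingerSyIDS_eq hE]
  have growth (x : ℝ) (hx : 1 ≤ x) : luttingerSyIDS ν x ≤ π⁻¹ * x :=
    calc luttingerSyIDS ν x ≤ √x / π := luttingerSyIDS_le_sqrt_div_pi hν (by linarith)
      _ ≤ π⁻¹ * x := by
        rw [div_eq_inv_mul]
        gcongr
        exact (sqrt_le_left (by linarith)).2 (by nlinarith)
  exact ⟨fun m hm => lintegral_inv_exp_sub_one_lt_top hβ
      (fun x _ => luttingerSyIDS_nonneg hν.le x) (fun x hx _ => luttingerSyIDS_le_pow_three hν hx)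
      growth hm,
    tendsto_neg_log_luttingerSyIDS_mul_sqrt hν⟩
end
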